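/- If (M,𝔛) ⊨ RCA₀ and there is a definable ultrafilter U on P_𝔛, then (M,𝔛) ⊨ ACA₀. -/

import Mathlib

namespace Paper

/-! ### Syntax of (second-order) arithmetic.

Terms of the language `L_A = {0, 1, +, ·, <}`, with number variables indexed by `ℕ`.
Formulas also allow atomic formulas `t ∈ X_k` (membership in a set variable) and
set quantifiers `allS`; first-order formulas are those avoiding both. -/

inductive PTerm where
  | var : ℕ → PTerm
  | zero : PTerm
  | one : PTerm
  | add : PTerm → PTerm → PTerm
  | mul : PTerm → PTerm → PTerm

inductive Fml where
  | eq : PTerm → PTerm → Fml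
  | lt : PTerm → PTerm → Fml
  | mem : PTerm → ℕ → Fml
  | not : Fml → Fml
  | imp : Fml → Fml → Fml
  | all : ℕ → Fml → Fml
  | allS : ℕ → Fml → Fml

def Fml.and (φ ψ : Fml) : Fml := .not (.imp φ (.not ψ))
def Fml.or (φ ψ : Fml) : Fml := .imp (.not φ) ψ
def Fml.iff (φ ψ : Fml) : Fml := (Fml.imp φ ψ).and (Fml.imp ψ φ)
def Fml.ex (x : ℕ) (φ : Fml) : Fml := .not (.all x (.not φ))
def Fml.exS (k : ℕ) (φ : Fml) : Fml := .not (.allS k (.not φ))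

/-- A structure for the language `{0, 1, +, ·, <}` on a carrier `M`
(bundled, so that several structures can live on the same carrier). -/
structure AStr (M : Type) where
  zero : M
  one : M
  add : M → M → M
  mul : M → M → M
  lt : M → M → Prop

/-- The standard model of arithmetic. -/
def natStr : AStr ℕ := ⟨0, 1, (· + ·), (· * ·), (· < ·)⟩

namespace PTerm

def vars : PTerm → Finset ℕ
  | var n => {n}
  | zero => ∅
  | one => ∅
  | add t u => t.vars ∪ u.vars
  | mul t u => t.vars ∪ u.vars

/-- Substitution of a term `r` for the variable `x` (used only with `r` closed or
with `vars r ⊆ {x}`, in which case it is capture-free). -/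
def subst (x : ℕ) (r : PTerm) : PTerm → PTerm
  | var n => if n = x then r else var n
  | zero => zero
  | one => one
  | add t u => add (subst x r t) (subst x r u)
  | mul t u => mul (subst x r t) (subst x r u)

def val {M : Type} (S : AStr M) (v : ℕ → M) : PTerm → M
  | var n => v n
  | zero => S.zero
  | one => S.one
  | add t u => S.add (t.val S v) (u.val S v)
  | mul t u => S.mul (t.val S v) (u.val S v)

end PTerm

namespace Fml

/-- Free number variables. -/
def freeN : Fml → Finset ℕ
  | eq t u => t.vars ∪ u.vars
  | lt t u => t.vars ∪ u.vars
  | mem t _ => t.vars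
  | not φ => φ.freeN
  | imp φ ψ => φ.freeN ∪ ψ.freeN
  | all x φ => φ.freeN.erase x
  | allS _ φ => φ.freeN

/-- Substitution of a term `r` for the (free) variable `x`. -/
def substN (x : ℕ) (r : PTerm) : Fml → Fml
  | eq t u => eq (PTerm.subst x r t) (PTerm.subst x r u)
  | lt t u => lt (PTerm.subst x r t) (PTerm.subst x r u)
  | mem t k => mem (PTerm.subst x r t) k
  | not φ => not (substN x r φ)
  | imp φ ψ => imp (substN x r φ) (substN x r ψ)
  | all y φ => if y = x then all y φ else all y (substN x r φ)
  | allS k φ => allS k (substN x r φ)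

/-- First-order formulas: no set variables, no set quantifiers. -/
def IsFO : Fml → Prop
  | eq _ _ => True
  | lt _ _ => True
  | mem _ _ => False
  | not φ => φ.IsFO
  | imp φ ψ => φ.IsFO ∧ ψ.IsFO
  | all _ φ => φ.IsFO
  | allS _ _ => False

/-- Arithmetical formulas: set variables allowed as parameters, but no set quantifiers. -/
def IsArith : Fml → Prop
  | eq _ _ => True
  | lt _ _ => True
  | mem _ _ => True
  | not φ => φ.IsArith
  | imp φ ψ => φ.IsArith ∧ ψ.IsArith
  | all _ φ => φ.IsArith
  | allS _ _ => False

end Fml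

/-! ### Satisfaction -/

/-- Satisfaction for a second-order structure `(M, 𝔛)`: number quantifiers range over `M`,
set quantifiers range over `𝔛`. -/
def Sat {M : Type} (S : AStr M) (𝔛 : Set (Set M)) : (ℕ → M) → (ℕ → Set M) → Fml → Prop
  | v, _, .eq t u => t.val S v = u.val S v
  | v, _, .lt t u => S.lt (t.val S v) (u.val S v)
  | v, w, .mem t k => t.val S v ∈ w k
  | v, w, .not φ => ¬ Sat S 𝔛 v w φ
  | v, w, .imp φ ψ => Sat S 𝔛 v w φ → Sat S 𝔛 v w ψ
  | v, w, .all x φ => ∀ a : M, Sat S 𝔛 (Function.update v x a) w φ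
  | v, w, .allS k φ => ∀ X ∈ 𝔛, Sat S 𝔛 v (Function.update w k X) φ

/-- First-order satisfaction. -/
def SatFO {M : Type} (S : AStr M) (v : ℕ → M) (φ : Fml) : Prop :=
  Sat S Set.univ v (fun _ => ∅) φ

/-- `M ⊨ T` for a first-order theory `T`. -/
def ModelsT {M : Type} (S : AStr M) (T : Set Fml) : Prop :=
  ∀ φ ∈ T, ∀ v, SatFO S v φ

/-- Semantic consequence (equivalently, by the completeness theorem, provability). -/
def Proves (T : Set Fml) (φ : Fml) : Prop :=
  ∀ (M : Type) (S : AStr M), ModelsT S T → ∀ v, SatFO S v φ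

/-- Consistency (equivalently, by the completeness theorem, having a model). -/
def ConsistentT (T : Set Fml) : Prop :=
  ∃ (M : Type) (S : AStr M), ModelsT S T

def IsFOSentence (φ : Fml) : Prop := φ.IsFO ∧ φ.freeN = ∅

/-- Completeness of a theory. -/
def CompleteT (T : Set Fml) : Prop :=
  ∀ φ, IsFOSentence φ → (Proves T φ ∨ Proves T φ.not)

/-! ### Peano arithmetic -/

def numeral : ℕ → PTerm
  | 0 => .zero
  | n + 1 => .add (numeral n) .one

def univClosure (φ : Fml) : Fml := (φ.freeN.sort (· ≤ ·)).foldr Fml.all φ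

/-- The induction axiom for `φ` in the variable `x` (before taking universal closure). -/
def indFml (φ : Fml) (x : ℕ) : Fml :=
  .imp ((φ.substN x .zero).and (.all x (.imp φ (φ.substN x (.add (.var x) .one)))))
    (.all x φ)

/-- The axioms of first-order Peano arithmetic `PA`. -/
def PAax : Set Fml :=
  {Fml.all 0 (.not (.eq (.add (.var 0) .one) .zero)),
   Fml.all 0 (.all 1 (.imp (.eq (.add (.var 0) .one) (.add (.var 1) .one))
     (.eq (.var 0) (.var 1)))),
   Fml.all 0 (.eq (.add (.var 0) .zero) (.var 0)),
   Fml.all 0 (.all 1 (.eq (.add (.var 0) (.add (.var 1) .one))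
     (.add (.add (.var 0) (.var 1)) .one))),
   Fml.all 0 (.eq (.mul (.var 0) .zero) .zero),
   Fml.all 0 (.all 1 (.eq (.mul (.var 0) (.add (.var 1) .one))
     (.add (.mul (.var 0) (.var 1)) (.var 0)))),
   Fml.all 0 (.all 1 (Fml.iff (.lt (.var 0) (.var 1))
     (Fml.ex 2 (.eq (.add (.var 0) (.add (.var 2) .one)) (.var 1)))))} ∪
  {ψ | ∃ φ x, Fml.IsFO φ ∧ ψ = univClosure (indFml φ x)}

/-! ### Gödel coding -/

/-- The Cantor pairing function (the canonical pairing `⟨·,·⟩`). -/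
def cpair (a b : ℕ) : ℕ := (a + b) * (a + b + 1) / 2 + a

def PTerm.code : PTerm → ℕ
  | .var n => cpair 0 n
  | .zero => cpair 1 0
  | .one => cpair 2 0
  | .add t u => cpair 3 (cpair t.code u.code)
  | .mul t u => cpair 4 (cpair t.code u.code)

def Fml.code : Fml → ℕ
  | .eq t u => cpair 5 (cpair t.code u.code)
  | .lt t u => cpair 6 (cpair t.code u.code)
  | .not φ => cpair 7 φ.code
  | .imp φ ψ => cpair 8 (cpair φ.code ψ.code)
  | .all x φ => cpair 9 (cpair x φ.code)
  | .mem t k => cpair 10 (cpair t.code k)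
  | .allS k φ => cpair 11 (cpair k φ.code)

/-- A theory identified with its set of Gödel codes. -/
def theoryCode (T : Set Fml) : Set ℕ := Fml.code '' T

/-! ### The arithmetical hierarchy (syntactic classes) -/

inductive IsDelta0 : Fml → Prop
  | eq (t u) : IsDelta0 (.eq t u)
  | lt (t u) : IsDelta0 (.lt t u)
  | mem (t k) : IsDelta0 (.mem t k)
  | not {φ} : IsDelta0 φ → IsDelta0 φ.not
  | imp {φ ψ} : IsDelta0 φ → IsDelta0 ψ → IsDelta0 (φ.imp ψ)
  | ball {φ} (x t) : x ∉ PTerm.vars t → IsDelta0 φ →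
      IsDelta0 (.all x (.imp (.lt (.var x) t) φ))

def IsSigma01 (φ : Fml) : Prop := ∃ x ψ, IsDelta0 ψ ∧ φ = Fml.ex x ψ

def IsPi01 (φ : Fml) : Prop := ∃ x ψ, IsDelta0 ψ ∧ φ = Fml.all x ψ

/-! ### Subsystems of second-order arithmetic, semantically -/

/-- The basic axioms (`PA⁻`, a discretely ordered commutative semiring). -/
def PAminusSem {M : Type} (S : AStr M) : Prop :=
  (∀ a b c : M, S.add a (S.add b c) = S.add (S.add a b) c) ∧
  (∀ a b : M, S.add a b = S.add b a) ∧
  (∀ a b c : M, S.mul a (S.mul b c) = S.mul (S.mul a b) c) ∧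
  (∀ a b : M, S.mul a b = S.mul b a) ∧
  (∀ a b c : M, S.mul a (S.add b c) = S.add (S.mul a b) (S.mul a c)) ∧
  (∀ a : M, S.add a S.zero = a) ∧
  (∀ a : M, S.mul a S.zero = S.zero) ∧
  (∀ a : M, S.mul a S.one = a) ∧
  (∀ a b c : M, S.lt a b → S.lt b c → S.lt a c) ∧
  (∀ a : M, ¬ S.lt a a) ∧
  (∀ a b : M, S.lt a b ∨ a = b ∨ S.lt b a) ∧
  (∀ a b c : M, S.lt a b → S.lt (S.add a c) (S.add b c)) ∧
  (∀ a b c : M, S.lt S.zero c → S.lt a b → S.lt (S.mul a c) (S.mul b c)) ∧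
  (∀ a b : M, S.lt a b → ∃ c : M, S.add a c = b) ∧
  S.lt S.zero S.one ∧
  (∀ a : M, S.lt S.zero a → a = S.one ∨ S.lt S.one a) ∧
  (∀ a : M, a = S.zero ∨ S.lt S.zero a)

/-- `(M,𝔛)` satisfies the induction axiom for `φ` in the variable `x`
(with arbitrary number and set parameters). -/
def SatInd {M : Type} (S : AStr M) (𝔛 : Set (Set M)) (φ : Fml) (x : ℕ) : Prop :=
  ∀ (v : ℕ → M) (w : ℕ → Set M), (∀ k, w k ∈ 𝔛) →
    (Sat S 𝔛 (Function.update v x S.zero) w φ ∧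
      ∀ a, Sat S 𝔛 (Function.update v x a) w φ →
        Sat S 𝔛 (Function.update v x (S.add a S.one)) w φ) →
    ∀ a, Sat S 𝔛 (Function.update v x a) w φ

/-- `(M,𝔛) ⊨ RCA₀`: basic axioms, `Σ⁰₁` induction and `Δ⁰₁` comprehension. -/
def SatRCA0 {M : Type} (S : AStr M) (𝔛 : Set (Set M)) : Prop :=
  PAminusSem S ∧
  (∀ φ x, IsSigma01 φ → SatInd S 𝔛 φ x) ∧
  (∀ φ ψ x, IsSigma01 φ → IsPi01 ψ →
    ∀ (v : ℕ → M) (w : ℕ → Set M), (∀ k, w k ∈ 𝔛) →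
      (∀ a, Sat S 𝔛 (Function.update v x a) w φ ↔ Sat S 𝔛 (Function.update v x a) w ψ) →
      {a : M | Sat S 𝔛 (Function.update v x a) w φ} ∈ 𝔛)

/-- `(M,𝔛) ⊨ ACA₀`: basic axioms, the induction axiom and arithmetical comprehension. -/
def SatACA0 {M : Type} (S : AStr M) (𝔛 : Set (Set M)) : Prop :=
  PAminusSem S ∧
  (∀ X ∈ 𝔛, S.zero ∈ X → (∀ a, a ∈ X → S.add a S.one ∈ X) → ∀ a, a ∈ X) ∧
  (∀ φ x, Fml.IsArith φ → ∀ (v : ℕ → M) (w : ℕ → Set M), (∀ k, w k ∈ 𝔛) →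
    {a : M | Sat S 𝔛 (Function.update v x a) w φ} ∈ 𝔛)

/-! ### Arithmetization inside a model

All notions below unfold the standard (`Δ₀`/`Σ₁`) arithmetized definitions at the
meta-level, using the operations of a structure `S : AStr M`.  On models of `IΣ₁`
they agree with satisfaction of the corresponding arithmetic formulas. -/

namespace AStr

variable {M : Type} (S : AStr M)

/-- Interpretation of numerals. -/
def num : ℕ → M
  | 0 => S.zero
  | n + 1 => S.add (num n) S.one

def le (a b : M) : Prop := S.lt a b ∨ a = b

def two : M := S.add S.one S.one

/-- `p = ⟨a,b⟩` for the Cantor pairing function: `2p = (a+b)(a+b+1) + 2a`. -/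
def PairRel (p a b : M) : Prop :=
  S.mul S.two p = S.add (S.mul (S.add a b) (S.add (S.add a b) S.one)) (S.mul S.two a)

/-- `r = a mod m`. -/
def ModRel (a m r : M) : Prop := S.lt r m ∧ ∃ q, a = S.add (S.mul q m) r

/-- Gödel's β-function: `x = β(c, i)` where `c = ⟨a,b⟩` and `x = a mod (1 + (i+1)b)`. -/
def BetaRel (c i x : M) : Prop :=
  ∃ a b, S.PairRel c a b ∧ S.ModRel a (S.add S.one (S.mul (S.add i S.one) b)) x

/-- `s` codes a sequence of length `l` (as `s = ⟨c, l⟩`). -/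
def SeqLen (s l : M) : Prop := ∃ c, S.PairRel s c l

/-- The `i`-th entry of the sequence coded by `s` is `x`. -/
def SeqAt (s i x : M) : Prop := ∃ c l, S.PairRel s c l ∧ S.lt i l ∧ S.BetaRel c i x

/-- The fixed `Δ₀` coding formula `x ∈ y` for (bounded) sets:
`y = ⟨a,b⟩` and `a mod (1 + (x+1)b) = 1` with modulus `> 1`, and `x < y`. -/
def MemRel (x y : M) : Prop :=
  S.lt x y ∧ ∃ a b, S.PairRel y a b ∧
    S.lt S.one (S.add S.one (S.mul (S.add x S.one) b)) ∧
    S.ModRel a (S.add S.one (S.mul (S.add x S.one) b)) S.one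

/-- Tagged pairs, used for codes of syntax: `x = ⟨tag, payload⟩`. -/
def Node (x tag payload : M) : Prop := S.PairRel x tag payload

/-- `x` is the code of the variable `v`. -/
def VarC (v x : M) : Prop := S.Node x (S.num 0) v

def AddC (t u y : M) : Prop := ∃ p, S.PairRel p t u ∧ S.Node y (S.num 3) p
def MulC (t u y : M) : Prop := ∃ p, S.PairRel p t u ∧ S.Node y (S.num 4) p
def EqC (t u y : M) : Prop := ∃ p, S.PairRel p t u ∧ S.Node y (S.num 5) p
def LtC (t u y : M) : Prop := ∃ p, S.PairRel p t u ∧ S.Node y (S.num 6) p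
def NotC (x y : M) : Prop := S.Node y (S.num 7) x
def ImpC (x y z : M) : Prop := ∃ p, S.PairRel p x y ∧ S.Node z (S.num 8) p
def AllC (v x y : M) : Prop := ∃ p, S.PairRel p v x ∧ S.Node y (S.num 9) p

/-- `s` codes a construction sequence for terms. -/
def IsTermConSeq (s : M) : Prop :=
  ∀ i x, S.SeqAt s i x →
    (∃ v, S.VarC v x) ∨ S.Node x (S.num 1) (S.num 0) ∨ S.Node x (S.num 2) (S.num 0) ∨
    (∃ j k y z, S.lt j i ∧ S.lt k i ∧ S.SeqAt s j y ∧ S.SeqAt s k z ∧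
      (S.AddC y z x ∨ S.MulC y z x))

/-- `x` is a term code (in the sense of `M`, possibly nonstandard). -/
def TermCodeM (x : M) : Prop := ∃ s i, S.IsTermConSeq s ∧ S.SeqAt s i x

/-- `s` codes a construction sequence for (first-order) formulas. -/
def IsFmlConSeq (s : M) : Prop :=
  ∀ i x, S.SeqAt s i x →
    (∃ t u, S.TermCodeM t ∧ S.TermCodeM u ∧ (S.EqC t u x ∨ S.LtC t u x)) ∨
    (∃ j y, S.lt j i ∧ S.SeqAt s j y ∧ S.NotC y x) ∨
    (∃ j k y z, S.lt j i ∧ S.lt k i ∧ S.SeqAt s j y ∧ S.SeqAt s k z ∧ S.ImpC y z x) ∨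
    (∃ j v y, S.lt j i ∧ S.SeqAt s j y ∧ S.AllC v y x)

/-- `x` is a formula code (in the sense of `M`, possibly nonstandard). -/
def FmlCodeM (x : M) : Prop := ∃ s i, S.IsFmlConSeq s ∧ S.SeqAt s i x

/-- Construction sequences of pairs (term code, occurrence flag for the variable `v`). -/
def IsOccConSeq (v s : M) : Prop :=
  ∀ i p, S.SeqAt s i p → ∃ x f, S.PairRel p x f ∧
    ((S.VarC v x ∧ f = S.num 1) ∨
     (∃ u, S.VarC u x ∧ u ≠ v ∧ f = S.num 0) ∨
     ((S.Node x (S.num 1) (S.num 0) ∨ S.Node x (S.num 2) (S.num 0)) ∧ f = S.num 0) ∨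
     (∃ j k y z g h pj pk, S.lt j i ∧ S.lt k i ∧ S.SeqAt s j pj ∧ S.SeqAt s k pk ∧
       S.PairRel pj y g ∧ S.PairRel pk z h ∧ (S.AddC y z x ∨ S.MulC y z x) ∧
       ((f = S.num 1 ∧ (g = S.num 1 ∨ h = S.num 1)) ∨
        (f = S.num 0 ∧ g = S.num 0 ∧ h = S.num 0))))

/-- `f = 1` iff the variable `v` occurs in the term coded by `t` (`f ∈ {0,1}`). -/
def OccT (v t f : M) : Prop :=
  ∃ s i p, S.IsOccConSeq v s ∧ S.SeqAt s i p ∧ S.PairRel p t f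

/-- Construction sequences of pairs (formula code, freeness flag for the variable `v`). -/
def IsFreeConSeq (v s : M) : Prop :=
  ∀ i p, S.SeqAt s i p → ∃ x f, S.PairRel p x f ∧
    ((∃ t u, (S.EqC t u x ∨ S.LtC t u x) ∧
       ((f = S.num 1 ∧ (S.OccT v t (S.num 1) ∨ S.OccT v u (S.num 1))) ∨
        (f = S.num 0 ∧ S.OccT v t (S.num 0) ∧ S.OccT v u (S.num 0)))) ∨
     (∃ j y g pj, S.lt j i ∧ S.SeqAt s j pj ∧ S.PairRel pj y g ∧ S.NotC y x ∧ f = g) ∨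
     (∃ j k y z g h pj pk, S.lt j i ∧ S.lt k i ∧ S.SeqAt s j pj ∧ S.SeqAt s k pk ∧
       S.PairRel pj y g ∧ S.PairRel pk z h ∧ S.ImpC y z x ∧
       ((f = S.num 1 ∧ (g = S.num 1 ∨ h = S.num 1)) ∨
        (f = S.num 0 ∧ g = S.num 0 ∧ h = S.num 0))) ∨
     (∃ j w y g pj, S.lt j i ∧ S.SeqAt s j pj ∧ S.PairRel pj y g ∧ S.AllC w y x ∧
       ((w = v ∧ f = S.num 0) ∨ (w ≠ v ∧ f = g))))

/-- `f = 1` iff the variable `v` is free in the formula coded by `φ`. -/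
def FreeF (v φ f : M) : Prop :=
  ∃ s i p, S.IsFreeConSeq v s ∧ S.SeqAt s i p ∧ S.PairRel p φ f

/-- Construction sequences of pairs (term code, result of substituting `t` for `v`). -/
def IsSubTConSeq (v t s : M) : Prop :=
  ∀ i p, S.SeqAt s i p → ∃ x x', S.PairRel p x x' ∧
    ((S.VarC v x ∧ x' = t) ∨
     (∃ u, S.VarC u x ∧ u ≠ v ∧ x' = x) ∨
     ((S.Node x (S.num 1) (S.num 0) ∨ S.Node x (S.num 2) (S.num 0)) ∧ x' = x) ∨
     (∃ j k y z y' z' pj pk, S.lt j i ∧ S.lt k i ∧ S.SeqAt s j pj ∧ S.SeqAt s k pk ∧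
       S.PairRel pj y y' ∧ S.PairRel pk z z' ∧
       ((S.AddC y z x ∧ S.AddC y' z' x') ∨ (S.MulC y z x ∧ S.MulC y' z' x'))))

/-- Substitution of the term (code) `t` for the variable `v` in terms: `x' = x[t/v]`. -/
def SubT (v t x x' : M) : Prop :=
  ∃ s i p, S.IsSubTConSeq v t s ∧ S.SeqAt s i p ∧ S.PairRel p x x'

/-- Construction sequences for capture-free substitution in formulas. -/
def IsSubFConSeq (v t s : M) : Prop :=
  ∀ i p, S.SeqAt s i p → ∃ x x', S.PairRel p x x' ∧
    ((∃ a b a' b', S.SubT v t a a' ∧ S.SubT v t b b' ∧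
       ((S.EqC a b x ∧ S.EqC a' b' x') ∨ (S.LtC a b x ∧ S.LtC a' b' x'))) ∨
     (∃ j y y' pj, S.lt j i ∧ S.SeqAt s j pj ∧ S.PairRel pj y y' ∧
       S.NotC y x ∧ S.NotC y' x') ∨
     (∃ j k y z y' z' pj pk, S.lt j i ∧ S.lt k i ∧ S.SeqAt s j pj ∧ S.SeqAt s k pk ∧
       S.PairRel pj y y' ∧ S.PairRel pk z z' ∧ S.ImpC y z x ∧ S.ImpC y' z' x') ∨
     (∃ w y, S.AllC w y x ∧
       ((w = v ∧ x' = x) ∨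
        (w ≠ v ∧ (S.OccT w t (S.num 0) ∨ S.FreeF v y (S.num 0)) ∧
          ∃ j y' pj, S.lt j i ∧ S.SeqAt s j pj ∧ S.PairRel pj y y' ∧ S.AllC w y' x'))))

/-- Capture-free substitution in formulas: `x' = x[t/v]`, with `t` substitutable for `v`. -/
def SubF (v t x x' : M) : Prop :=
  ∃ s i p, S.IsSubFConSeq v t s ∧ S.SeqAt s i p ∧ S.PairRel p x x'

/-- `x` is (the code of) a generalization `∀v₁ ⋯ ∀vₖ y` of `y`. -/
def GenOf (y x : M) : Prop :=
  ∃ s i, S.SeqAt s (S.num 0) y ∧ S.SeqAt s i x ∧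
    ∀ j z z', S.SeqAt s j z → S.SeqAt s (S.add j S.one) z' → S.le (S.add j S.one) i →
      ∃ v, S.AllC v z z'

/-- Codes of instances of the logical axiom schemes (a Hilbert-style calculus with
modus ponens as the only rule; axioms are taken together with their generalizations). -/
def LogAxCore (x : M) : Prop :=
  -- A1 : a → (b → a)
  (∃ a b y, S.FmlCodeM a ∧ S.FmlCodeM b ∧ S.ImpC b a y ∧ S.ImpC a y x) ∨
  -- A2 : (a → (b → c)) → ((a → b) → (a → c))
  (∃ a b c bc abc ab ac r, S.FmlCodeM a ∧ S.FmlCodeM b ∧ S.FmlCodeM c ∧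
    S.ImpC b c bc ∧ S.ImpC a bc abc ∧ S.ImpC a b ab ∧ S.ImpC a c ac ∧
    S.ImpC ab ac r ∧ S.ImpC abc r x) ∨
  -- A3 : (¬b → ¬a) → (a → b)
  (∃ a b na nb l r, S.FmlCodeM a ∧ S.FmlCodeM b ∧ S.NotC a na ∧ S.NotC b nb ∧
    S.ImpC nb na l ∧ S.ImpC a b r ∧ S.ImpC l r x) ∨
  -- A4 : ∀v a → a[t/v]
  (∃ v t a a' al, S.TermCodeM t ∧ S.FmlCodeM a ∧ S.AllC v a al ∧ S.SubF v t a a' ∧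
    S.ImpC al a' x) ∨
  -- A5 : ∀v (a → b) → (∀v a → ∀v b)
  (∃ v a b ab alab ala alb r, S.FmlCodeM a ∧ S.FmlCodeM b ∧ S.ImpC a b ab ∧
    S.AllC v ab alab ∧ S.AllC v a ala ∧ S.AllC v b alb ∧ S.ImpC ala alb r ∧
    S.ImpC alab r x) ∨
  -- A6 : a → ∀v a, for v not free in a
  (∃ v a ala, S.FmlCodeM a ∧ S.FreeF v a (S.num 0) ∧ S.AllC v a ala ∧ S.ImpC a ala x) ∨
  -- E1 : t = t
  (∃ t, S.TermCodeM t ∧ S.EqC t t x) ∨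
  -- E2 : u = w → w = u (variables)
  (∃ u w vu vw e1 e2, S.VarC u vu ∧ S.VarC w vw ∧ S.EqC vu vw e1 ∧ S.EqC vw vu e2 ∧
    S.ImpC e1 e2 x) ∨
  -- E3 : u = w → (w = z → u = z) (variables)
  (∃ u w z vu vw vz e1 e2 e3 r, S.VarC u vu ∧ S.VarC w vw ∧ S.VarC z vz ∧
    S.EqC vu vw e1 ∧ S.EqC vw vz e2 ∧ S.EqC vu vz e3 ∧ S.ImpC e2 e3 r ∧ S.ImpC e1 r x) ∨
  -- E4 : congruence of +, ·, < with respect to = (variables)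
  (∃ u1 w1 u2 w2 a1 b1 a2 b2 e1 e2 s1 s2 es r,
    S.VarC u1 a1 ∧ S.VarC w1 b1 ∧ S.VarC u2 a2 ∧ S.VarC w2 b2 ∧
    S.EqC a1 b1 e1 ∧ S.EqC a2 b2 e2 ∧
    ((S.AddC a1 a2 s1 ∧ S.AddC b1 b2 s2 ∧ S.EqC s1 s2 es) ∨
     (S.MulC a1 a2 s1 ∧ S.MulC b1 b2 s2 ∧ S.EqC s1 s2 es) ∨
     (S.LtC a1 a2 s1 ∧ S.LtC b1 b2 s2 ∧ S.ImpC s1 s2 es)) ∧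
    S.ImpC e2 es r ∧ S.ImpC e1 r x) ∨
  -- E5 : congruence of = (variables)
  (∃ u1 w1 u2 w2 a1 b1 a2 b2 e1 e2 d1 d2 inner r,
    S.VarC u1 a1 ∧ S.VarC w1 b1 ∧ S.VarC u2 a2 ∧ S.VarC w2 b2 ∧
    S.EqC a1 b1 e1 ∧ S.EqC a2 b2 e2 ∧ S.EqC a1 a2 d1 ∧ S.EqC b1 b2 d2 ∧
    S.ImpC d1 d2 inner ∧ S.ImpC e2 inner r ∧ S.ImpC e1 r x)

/-- Logical axioms: generalizations of instances of the axiom schemes. -/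
def LogAx (x : M) : Prop := ∃ y, S.LogAxCore y ∧ S.GenOf y x

/-- `s` codes a proof of `φ` from the set `Γ ⊆ M` of (codes of) sentences:
every entry is a logical axiom, a member of `Γ`, or follows by modus ponens. -/
def ProofFrom (Γ : Set M) (s φ : M) : Prop :=
  (∃ i, S.SeqAt s i φ) ∧
  ∀ i x, S.SeqAt s i x →
    S.LogAx x ∨ x ∈ Γ ∨
    (∃ j k y z, S.lt j i ∧ S.lt k i ∧ S.SeqAt s j y ∧ S.SeqAt s k z ∧ S.ImpC y x z)

/-- Provability (in the sense of `M`) from the axiom set `Γ ⊆ M`. -/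
def ProvFrom (Γ : Set M) (φ : M) : Prop := ∃ s, S.ProofFrom Γ s φ

/-- `M ⊨ Con_Γ` : there is no (possibly nonstandard) proof of a contradiction from `Γ`. -/
def ConOf (Γ : Set M) : Prop :=
  ¬ ∃ φ nφ, S.NotC φ nφ ∧ S.ProvFrom Γ φ ∧ S.ProvFrom Γ nφ

/-- `M ⊨ Con_T` for a (standard) theory `T`: `M` thinks every finite subtheory
of `T` is consistent. -/
def SatConTheory (T : Set Fml) : Prop :=
  ∀ F : Finset Fml, ↑F ⊆ T → S.ConOf {x : M | ∃ φ ∈ F, x = S.num (Fml.code φ)}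

/-! ### Coded sets, standard systems, filters on `P_𝔛` -/

/-- `A` is unbounded in `M`. -/
def Unb (A : Set M) : Prop := ∀ b, ∃ a ∈ A, S.lt b a

/-- `P_𝔛`: the collection of unbounded sets in `𝔛` (a partial order under `⊆`). -/
def PX (𝔛 : Set (Set M)) : Set (Set M) := {A | A ∈ 𝔛 ∧ S.Unb A}

/-- The `a`-th slice `(A)_a = {b | ⟨a,b⟩ ∈ A}`. -/
def SliceAt (A : Set M) (a : M) : Set M := {b | ∃ p, S.PairRel p a b ∧ p ∈ A}

/-- A function `M → M` is coded in `𝔛` if its graph (via the canonical pairing)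
belongs to `𝔛`. -/
def CodedFun (𝔛 : Set (Set M)) (f : M → M) : Prop :=
  ∃ G ∈ 𝔛, ∀ a b, f a = b ↔ b ∈ S.SliceAt G a

/-- A family `F` of sets is definable (over `(M,𝔛)`) if `{a | (A)_a ∈ F} ∈ 𝔛`
for every `A ∈ 𝔛`. -/
def DefinableFam (𝔛 F : Set (Set M)) : Prop :=
  ∀ A ∈ 𝔛, {a : M | S.SliceAt A a ∈ F} ∈ 𝔛

/-- `F` is a complete family: every function coded in `𝔛` with bounded range is
constant on some member of `F`. -/
def CompleteOn (𝔛 F : Set (Set M)) : Prop :=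
  ∀ f : M → M, S.CodedFun 𝔛 f → (∃ b, ∀ a, S.lt (f a) b) →
    ∃ A ∈ F, ∀ x ∈ A, ∀ y ∈ A, f x = f y

/-- The standard system `SSy(M)`: standard parts of the `M`-coded sets. -/
def SSy : Set (Set ℕ) := {A | ∃ c : M, ∀ n : ℕ, (n ∈ A ↔ S.MemRel (S.num n) c)}

/-- `M` is nonstandard. -/
def Nonstd : Prop := ∃ a : M, ∀ n : ℕ, a ≠ S.num n

/-- `M` is recursively saturated: every recursive type (in the variable `0`, with
finitely many parameters assigned to the variables `1, …, k`) that is finitely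
realized in `M` is realized in `M`. -/
def RecSat : Prop :=
  ∀ (p : Set Fml) (k : ℕ) (par : ℕ → M),
    (∀ φ ∈ p, Fml.IsFO φ ∧ φ.freeN ⊆ Finset.range (k + 1)) →
    ComputablePred (fun n => ∃ φ ∈ p, Fml.code φ = n) →
    (∀ F : Finset Fml, ↑F ⊆ p →
      ∃ a : M, ∀ φ ∈ F, SatFO S (fun i => if i = 0 then a else par i) φ) →
    ∃ a : M, ∀ φ ∈ p, SatFO S (fun i => if i = 0 then a else par i) φ

/-- `c` is the least code of the (bounded) set `A`. -/
def IsLeastCode (A : Set M) (c : M) : Prop :=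
  (∀ x, S.MemRel x c ↔ x ∈ A) ∧ ∀ c', (∀ x, S.MemRel x c' ↔ x ∈ A) → S.le c c'

/-- `A* = {⟨A ∩ I_{<a}⟩ | a ∈ M}`, the set of least codes of initial segments of `A`. -/
def star (A : Set M) : Set M :=
  {c | ∃ a, S.IsLeastCode (A ∩ {b | S.lt b a}) c}

end AStr

/-! ### Filters and partial orders of sets -/

/-- A filter on a partial order `P` of sets, ordered by inclusion: a proper, nonempty,
upward closed, downward directed subset of `P`. -/
def IsFilterOn {α : Type} (P F : Set (Set α)) : Prop :=
  F ⊆ P ∧ F.Nonempty ∧ F ≠ P ∧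
  (∀ A ∈ F, ∀ B ∈ P, A ⊆ B → B ∈ F) ∧
  (∀ A ∈ F, ∀ B ∈ F, ∃ C ∈ F, C ⊆ A ∧ C ⊆ B)

/-- An ultrafilter on a partial order of sets: a maximal filter. -/
def IsUltraOn {α : Type} (P U : Set (Set α)) : Prop :=
  IsFilterOn P U ∧ ∀ F, IsFilterOn P F → U ⊆ F → F = U

/-- A principal filter on a partial order of sets. -/
def IsPrincipalOn {α : Type} (P U : Set (Set α)) : Prop :=
  ∃ A ∈ P, U = {B | B ∈ P ∧ A ⊆ B}

/-- The countable chain condition for a partial order `P` of sets (ordered by `⊆`):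
every uncountable subset contains two distinct compatible elements. -/
def CCCOn {α : Type} (P : Set (Set α)) : Prop :=
  ∀ A : Set (Set α), A ⊆ P → ¬A.Countable →
    ∃ X ∈ A, ∃ Y ∈ A, X ≠ Y ∧ ∃ Z ∈ P, Z ⊆ X ∧ Z ⊆ Y

/-- `𝔛` is a Boolean algebra of sets. -/
def IsBoolAlg {α : Type} (𝔛 : Set (Set α)) : Prop :=
  Set.univ ∈ 𝔛 ∧ ∅ ∈ 𝔛 ∧
  (∀ A ∈ 𝔛, ∀ B ∈ 𝔛, A ∪ B ∈ 𝔛) ∧ (∀ A ∈ 𝔛, ∀ B ∈ 𝔛, A ∩ B ∈ 𝔛) ∧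
  (∀ A ∈ 𝔛, Aᶜ ∈ 𝔛)

/-- A filter on the Boolean algebra `𝔛`. -/
def IsBAFilter {α : Type} (𝔛 F : Set (Set α)) : Prop :=
  F ⊆ 𝔛 ∧ F.Nonempty ∧ ∅ ∉ F ∧
  (∀ A ∈ F, ∀ B ∈ 𝔛, A ⊆ B → B ∈ F) ∧
  (∀ A ∈ F, ∀ B ∈ F, A ∩ B ∈ F)

/-- An ultrafilter on the Boolean algebra `𝔛`: a maximal filter. -/
def IsBAUltra {α : Type} (𝔛 F : Set (Set α)) : Prop :=
  IsBAFilter 𝔛 F ∧ ∀ G, IsBAFilter 𝔛 G → F ⊆ G → G = F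

/-! ### Scott sets -/

/-- Oracle partial recursive functions: partial recursive in the oracle `O`. -/
inductive RecursiveIn (O : ℕ →. ℕ) : (ℕ →. ℕ) → Prop
  | oracle : RecursiveIn O O
  | zero : RecursiveIn O (pure 0)
  | succ : RecursiveIn O Nat.succ
  | left : RecursiveIn O ↑fun n : ℕ => n.unpair.1
  | right : RecursiveIn O ↑fun n : ℕ => n.unpair.2
  | pair {f g} : RecursiveIn O f → RecursiveIn O g →
      RecursiveIn O fun n => Nat.pair <$> f n <*> g n
  | comp {f g} : RecursiveIn O f → RecursiveIn O g →
      RecursiveIn O fun n => g n >>= f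
  | prec {f g} : RecursiveIn O f → RecursiveIn O g →
      RecursiveIn O (Nat.unpaired fun a n =>
        n.rec (f a) fun y IH => do let i ← IH; g (Nat.pair a (Nat.pair y i)))
  | rfind {f} : RecursiveIn O f →
      RecursiveIn O fun a => Nat.rfind fun n => (fun m => m = 0) <$> f (Nat.pair a n)

/-- The characteristic function of a set of natural numbers. -/
noncomputable def chi (A : Set ℕ) : ℕ →. ℕ :=
  fun n => Part.some (@ite _ (n ∈ A) (Classical.propDecidable _) 1 0)

/-- Turing reducibility: `B ≤_T A`. -/
def TuringLe (B A : Set ℕ) : Prop := RecursiveIn (chi A) (chi B)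

/-- A set of naturals coding a binary tree (codes of finite binary strings,
closed under initial segments). -/
def IsTreeCode (T : Set ℕ) : Prop :=
  (∀ n ∈ T, ∃ l : List Bool, Encodable.encode l = n) ∧
  (∀ l₁ l₂ : List Bool, l₁ <+: l₂ → Encodable.encode l₂ ∈ T → Encodable.encode l₁ ∈ T)

/-- `B` (as the characteristic function of a branch) is an infinite branch of the
binary tree coded by `T`. -/
def IsBranchThrough (B T : Set ℕ) : Prop :=
  ∀ n : ℕ, ∃ l : List Bool, l.length = n ∧
    (∀ i : Fin l.length, (l.get i = true ↔ (i : ℕ) ∈ B)) ∧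
    Encodable.encode l ∈ T

/-- A Scott set: a nonempty Boolean algebra of subsets of `ω` closed under relative
recursion and containing an infinite branch of every infinite binary tree coded in it. -/
def IsScottSet (𝔛 : Set (Set ℕ)) : Prop :=
  𝔛.Nonempty ∧
  (∀ A ∈ 𝔛, ∀ B ∈ 𝔛, A ∪ B ∈ 𝔛) ∧
  (∀ A ∈ 𝔛, Aᶜ ∈ 𝔛) ∧
  (∀ A ∈ 𝔛, ∀ B : Set ℕ, TuringLe B A → B ∈ 𝔛) ∧
  (∀ T ∈ 𝔛, IsTreeCode T → T.Infinite → ∃ B ∈ 𝔛, IsBranchThrough B T)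

/-- The sets represented in the theory `T`. -/
def repSet (T : Set Fml) : Set (Set ℕ) :=
  {A | ∃ φ : Fml, Fml.IsFO φ ∧ φ.freeN ⊆ {0} ∧
    ∀ n : ℕ, (n ∈ A → Proves T (φ.substN 0 (numeral n))) ∧
      (n ∉ A → Proves T (Fml.not (φ.substN 0 (numeral n))))}

/-- Martin's axiom. -/
def MartinsAxiom : Prop :=
  ∀ (P : Type) (_ : PartialOrder P),
    (∀ A : Set P, ¬A.Countable → ∃ x ∈ A, ∃ y ∈ A, x ≠ y ∧ ∃ z, z ≤ x ∧ z ≤ y) →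
    ∀ 𝒟 : Set (Set P), (∀ D ∈ 𝒟, ∀ x : P, ∃ y ∈ D, y ≤ x) →
      Cardinal.mk 𝒟 < Cardinal.continuum →
      ∃ F : Set P, F.Nonempty ∧ (∀ x ∈ F, ∀ y, x ≤ y → y ∈ F) ∧
        (∀ x ∈ F, ∀ y ∈ F, ∃ z ∈ F, z ≤ x ∧ z ≤ y) ∧
        ∀ D ∈ 𝒟, (F ∩ D).Nonempty


/-!
Tuples of elements of `M` are coded by iterated Cantor pairs. By induction on an arithmetical
formula `φ`, for every list `xs` of variables the set of codes of the tuples of values of `xs`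
satisfying `φ` belongs to `𝔛`. For atomic `φ` this set is `Δ₀`-definable (the tuple is decoded
by bounded quantifiers), so `Δ⁰₁` comprehension applies, and `𝔛` is closed under Boolean
operations. For `∀ z φ`, let `B` be the code set of `φ` with `z` prepended to `xs`, and
`D = {⟨p, m⟩ | ∀ c < m, ⟨c, p⟩ ∈ B}`, a `Δ₀` set in `B`. The slice `(D)_p` is all of `M` if
`∀ z φ` holds at the tuple coded by `p`, and is bounded otherwise. As the filter `U` contains `M`
and no bounded set, the code set of `∀ z φ` is `{p | (D)_p ∈ U}`, which is in `𝔛` because `U`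
is definable.
-/

open Function

namespace PAminusSem

variable {M : Type} {S : AStr M}

theorem add_assoc (hp : PAminusSem S) (a b c : M) :
    S.add a (S.add b c) = S.add (S.add a b) c := hp.1 a b c
theorem add_comm (hp : PAminusSem S) (a b : M) : S.add a b = S.add b a := hp.2.1 a b
theorem mul_comm (hp : PAminusSem S) (a b : M) : S.mul a b = S.mul b a := hp.2.2.2.1 a b
theorem mul_add (hp : PAminusSem S) (a b c : M) :
    S.mul a (S.add b c) = S.add (S.mul a b) (S.mul a c) := hp.2.2.2.2.1 a b c
theorem add_zero (hp : PAminusSem S) (a : M) : S.add a S.zero = a := hp.2.2.2.2.2.1 a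
theorem mul_zero (hp : PAminusSem S) (a : M) : S.mul a S.zero = S.zero := hp.2.2.2.2.2.2.1 a
theorem mul_one (hp : PAminusSem S) (a : M) : S.mul a S.one = a := hp.2.2.2.2.2.2.2.1 a
theorem lt_trans (hp : PAminusSem S) {a b c : M} (hab : S.lt a b) (hbc : S.lt b c) :
    S.lt a c := hp.2.2.2.2.2.2.2.2.1 a b c hab hbc
theorem lt_irrefl (hp : PAminusSem S) (a : M) : ¬ S.lt a a := hp.2.2.2.2.2.2.2.2.2.1 a
theorem lt_trichotomy (hp : PAminusSem S) (a b : M) : S.lt a b ∨ a = b ∨ S.lt b a :=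
  hp.2.2.2.2.2.2.2.2.2.2.1 a b
theorem add_lt_add_right (hp : PAminusSem S) {a b : M} (h : S.lt a b) (c : M) :
    S.lt (S.add a c) (S.add b c) := hp.2.2.2.2.2.2.2.2.2.2.2.1 a b c h
theorem mul_lt_mul_of_pos_right (hp : PAminusSem S) {a b c : M} (h : S.lt a b)
    (hc : S.lt S.zero c) : S.lt (S.mul a c) (S.mul b c) :=
  hp.2.2.2.2.2.2.2.2.2.2.2.2.1 a b c hc h
theorem zero_lt_one (hp : PAminusSem S) : S.lt S.zero S.one := hp.2.2.2.2.2.2.2.2.2.2.2.2.2.2.1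
theorem eq_one_or_one_lt (hp : PAminusSem S) {a : M} (h : S.lt S.zero a) :
    a = S.one ∨ S.lt S.one a := hp.2.2.2.2.2.2.2.2.2.2.2.2.2.2.2.1 a h
theorem eq_zero_or_pos (hp : PAminusSem S) (a : M) : a = S.zero ∨ S.lt S.zero a :=
  hp.2.2.2.2.2.2.2.2.2.2.2.2.2.2.2.2 a
theorem exists_add_of_lt (hp : PAminusSem S) {a b : M} (h : S.lt a b) : ∃ c, S.add a c = b :=
  hp.2.2.2.2.2.2.2.2.2.2.2.2.2.1 a b h

theorem zero_add (hp : PAminusSem S) (a : M) : S.add S.zero a = a := by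
  rw [hp.add_comm, hp.add_zero]

theorem add_lt_add_left (hp : PAminusSem S) {a b : M} (h : S.lt a b) (c : M) :
    S.lt (S.add c a) (S.add c b) := by
  rw [hp.add_comm c a, hp.add_comm c b]; exact hp.add_lt_add_right h c

theorem lt_add_one (hp : PAminusSem S) (a : M) : S.lt a (S.add a S.one) := by
  simpa only [hp.zero_add, hp.add_comm S.one] using hp.add_lt_add_right hp.zero_lt_one a

theorem lt_of_le_of_lt (hp : PAminusSem S) {a b c : M} (hab : S.le a b) (hbc : S.lt b c) :
    S.lt a c := by
  rcases hab with hab | rfl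
  exacts [hp.lt_trans hab hbc, hbc]

theorem lt_of_lt_of_le (hp : PAminusSem S) {a b c : M} (hab : S.lt a b) (hbc : S.le b c) :
    S.lt a c := by
  rcases hbc with hbc | rfl
  exacts [hp.lt_trans hab hbc, hab]

theorem le_trans (hp : PAminusSem S) {a b c : M} (hab : S.le a b) (hbc : S.le b c) :
    S.le a c := by
  rcases hab with hab | rfl
  exacts [Or.inl (hp.lt_of_lt_of_le hab hbc), hbc]

theorem not_lt_of_le (hp : PAminusSem S) {a b : M} (h : S.le a b) : ¬ S.lt b a :=
  fun hba => hp.lt_irrefl a (hp.lt_of_le_of_lt h hba)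

theorem le_of_not_lt (hp : PAminusSem S) {a b : M} (h : ¬ S.lt b a) : S.le a b := by
  rcases hp.lt_trichotomy a b with hab | hab | hba
  exacts [Or.inl hab, Or.inr hab, absurd hba h]

theorem lt_add_one_of_le (hp : PAminusSem S) {a b : M} (h : S.le a b) :
    S.lt a (S.add b S.one) :=
  hp.lt_of_le_of_lt h (hp.lt_add_one b)

theorem le_add_right (hp : PAminusSem S) (a c : M) : S.le a (S.add a c) := by
  rcases hp.eq_zero_or_pos c with rfl | hc
  · exact Or.inr (hp.add_zero a).symm
  · exact Or.inl (by simpa only [hp.add_zero] using hp.add_lt_add_left hc a)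

theorem le_add_left (hp : PAminusSem S) (a c : M) : S.le a (S.add c a) :=
  hp.add_comm a c ▸ hp.le_add_right a c

theorem add_le_add_left (hp : PAminusSem S) {a b : M} (h : S.le a b) (c : M) :
    S.le (S.add c a) (S.add c b) := by
  rcases h with h | rfl
  exacts [Or.inl (hp.add_lt_add_left h c), Or.inr rfl]

theorem add_le_add_right (hp : PAminusSem S) {a b : M} (h : S.le a b) (c : M) :
    S.le (S.add a c) (S.add b c) := by
  rw [hp.add_comm a c, hp.add_comm b c]; exact hp.add_le_add_left h c

theorem add_one_le_of_lt (hp : PAminusSem S) {a b : M} (h : S.lt a b) :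
    S.le (S.add a S.one) b := by
  obtain ⟨c, rfl⟩ := hp.exists_add_of_lt h
  rcases hp.eq_zero_or_pos c with rfl | hc
  · rw [hp.add_zero] at h; exact absurd h (hp.lt_irrefl a)
  · rcases hp.eq_one_or_one_lt hc with rfl | hc
    exacts [Or.inr rfl, Or.inl (hp.add_lt_add_left hc a)]

theorem mul_le_mul_right (hp : PAminusSem S) {a b : M} (h : S.le a b) (c : M) :
    S.le (S.mul a c) (S.mul b c) := by
  rcases hp.eq_zero_or_pos c with rfl | hc
  · exact Or.inr (by rw [hp.mul_zero, hp.mul_zero])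
  · rcases h with h | rfl
    exacts [Or.inl (hp.mul_lt_mul_of_pos_right h hc), Or.inr rfl]

theorem mul_le_mul_left (hp : PAminusSem S) {a b : M} (h : S.le a b) (c : M) :
    S.le (S.mul c a) (S.mul c b) := by
  rw [hp.mul_comm c a, hp.mul_comm c b]; exact hp.mul_le_mul_right h c

theorem injective_of_strictMono (hp : PAminusSem S) {f : M → M}
    (hf : ∀ {a b}, S.lt a b → S.lt (f a) (f b)) : Function.Injective f := by
  intro a b h
  rcases hp.lt_trichotomy a b with hab | hab | hba
  exacts [absurd (h ▸ hf hab) (hp.lt_irrefl _), hab, absurd (h ▸ hf hba) (hp.lt_irrefl _)]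

theorem lt_of_strictMono (hp : PAminusSem S) {f : M → M}
    (hf : ∀ {a b}, S.lt a b → S.lt (f a) (f b)) {a b : M} (h : S.lt (f a) (f b)) :
    S.lt a b := by
  rcases hp.lt_trichotomy a b with hab | rfl | hba
  exacts [hab, absurd h (hp.lt_irrefl _), absurd (hp.lt_trans h (hf hba)) (hp.lt_irrefl _)]

theorem le_of_strictMono (hp : PAminusSem S) {f : M → M}
    (hf : ∀ {a b}, S.lt a b → S.lt (f a) (f b)) {a b : M} (h : S.le (f a) (f b)) :
    S.le a b :=
  hp.le_of_not_lt fun hba => hp.not_lt_of_le h (hf hba)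

theorem add_self_lt_add_self (hp : PAminusSem S) {a b : M} (h : S.lt a b) :
    S.lt (S.add a a) (S.add b b) :=
  hp.lt_trans (hp.add_lt_add_right h a) (hp.add_lt_add_left h b)

theorem add_left_cancel (hp : PAminusSem S) {a b c : M} (h : S.add c a = S.add c b) : a = b :=
  hp.injective_of_strictMono (f := S.add c) (fun h => hp.add_lt_add_left h c) h

theorem add_self_inj (hp : PAminusSem S) {a b : M} (h : S.add a a = S.add b b) : a = b :=
  hp.injective_of_strictMono (f := fun a => S.add a a) hp.add_self_lt_add_self h

theorem two_mul (hp : PAminusSem S) (a : M) : S.mul S.two a = S.add a a := by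
  rw [hp.mul_comm, AStr.two, hp.mul_add, hp.mul_one]

theorem add_mul (hp : PAminusSem S) (a b c : M) :
    S.mul (S.add a b) c = S.add (S.mul a c) (S.mul b c) := by
  rw [hp.mul_comm, hp.mul_add, hp.mul_comm c a, hp.mul_comm c b]

theorem add_add_add_comm (hp : PAminusSem S) (a b c d : M) :
    S.add (S.add a b) (S.add c d) = S.add (S.add a c) (S.add b d) := by
  rw [← hp.add_assoc a b, hp.add_assoc b c d, hp.add_comm b c, ← hp.add_assoc c b d,
    hp.add_assoc a c]

theorem add_one_add_add_one (hp : PAminusSem S) (a : M) :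
    S.add (S.add a S.one) (S.add a S.one) = S.add (S.add (S.add a a) S.one) S.one := by
  rw [hp.add_assoc (S.add a S.one) a S.one, hp.add_comm (S.add a S.one) a, hp.add_assoc a a]

theorem pairRel_left_le (hp : PAminusSem S) {p a b : M} (h : S.PairRel p a b) : S.le a p :=
  hp.le_of_strictMono (f := fun a => S.add a a) hp.add_self_lt_add_self <| by
    simp only [← hp.two_mul]
    rw [h]
    exact hp.le_add_left _ _

theorem pairRel_right_le (hp : PAminusSem S) {p a b : M} (h : S.PairRel p a b) :
    S.le b (S.add p p) := by
  rw [← hp.two_mul, h]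
  have hs : S.le (S.add a b) (S.mul (S.add a b) (S.add (S.add a b) S.one)) := by
    rw [hp.mul_add, hp.mul_one]; exact hp.le_add_left _ _
  exact hp.le_trans (hp.le_add_left b a) (hp.le_trans hs (hp.le_add_right _ _))

theorem pairRel_lt_pairRel (hp : PAminusSem S) {p q a b c d : M} (h : S.PairRel p a b)
    (h' : S.PairRel q c d) (hs : S.lt (S.add a b) (S.add c d)) : S.lt p q := by
  -- with `s = a + b`, `s' = c + d`:
  -- `2p = s(s+1) + 2a ≤ s(s+1) + 2s < (s+1)(s+2) ≤ s'(s'+1) ≤ 2q`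
  refine hp.lt_of_strictMono (f := fun a => S.add a a) hp.add_self_lt_add_self ?_
  simp only [← hp.two_mul]
  rw [h, h']
  set s := S.add a b
  set e := S.add s S.one
  have h2a : S.le (S.mul S.two a) (S.mul S.two s) := hp.mul_le_mul_left (hp.le_add_right a b) _
  have h2s : S.lt (S.mul S.two s) (S.mul S.two e) := by
    rw [hp.two_mul, hp.two_mul]; exact hp.add_self_lt_add_self (hp.lt_add_one s)
  have hsucc : S.mul e (S.add e S.one) = S.add (S.mul s e) (S.mul S.two e) := by
    rw [hp.two_mul, hp.add_assoc, hp.mul_add e e S.one, hp.mul_one]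
    congr 1
    conv_lhs => rw [show e = S.add s S.one from rfl, hp.mul_add, hp.mul_one, hp.mul_comm]
  have hes : S.le e (S.add c d) := hp.add_one_le_of_lt hs
  have hmono : S.le (S.mul e (S.add e S.one))
      (S.mul (S.add c d) (S.add (S.add c d) S.one)) :=
    hp.le_trans (hp.mul_le_mul_right hes _) (hp.mul_le_mul_left (hp.add_le_add_right hes _) _)
  refine hp.lt_of_lt_of_le (hp.lt_of_le_of_lt (hp.add_le_add_left h2a _) ?_)
    (hp.le_trans hmono (hp.le_add_right _ _))
  rw [hsucc]
  exact hp.add_lt_add_left h2s _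

theorem pairRel_inj (hp : PAminusSem S) {p a b c d : M} (h : S.PairRel p a b)
    (h' : S.PairRel p c d) : a = c ∧ b = d := by
  rcases hp.lt_trichotomy (S.add a b) (S.add c d) with hs | hs | hs
  · exact absurd (hp.pairRel_lt_pairRel h h' hs) (hp.lt_irrefl p)
  · have h2 := h.symm.trans h'
    rw [hs] at h2
    have hac : a = c := hp.add_self_inj (by simpa only [hp.two_mul] using hp.add_left_cancel h2)
    subst hac
    exact ⟨rfl, hp.add_left_cancel hs⟩
  · exact absurd (hp.pairRel_lt_pairRel h' h hs) (hp.lt_irrefl p)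

theorem pairRel_components_lt (hp : PAminusSem S) {p a b : M} (h : S.PairRel p a b) :
    S.lt a (S.add (S.add p p) S.one) ∧ S.lt b (S.add (S.add p p) S.one) :=
  ⟨hp.lt_add_one_of_le (hp.le_trans (hp.pairRel_left_le h) (hp.le_add_right p p)),
    hp.lt_add_one_of_le (hp.pairRel_right_le h)⟩

theorem pairRel_unique (hp : PAminusSem S) {p q a b : M} (h : S.PairRel p a b)
    (h' : S.PairRel q a b) : p = q :=
  hp.add_self_inj (by rw [← hp.two_mul, ← hp.two_mul]; exact h.trans h'.symm)

end PAminusSem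

section

variable {M : Type} {S : AStr M} {𝔛 : Set (Set M)}

theorem PTerm.val_congr {v v' : ℕ → M} {t : PTerm} (h : ∀ n ∈ t.vars, v n = v' n) :
    t.val S v = t.val S v' := by
  induction t <;> simp_all [PTerm.vars, PTerm.val, or_imp, forall_and]

theorem sat_congr {φ : Fml} {v v' : ℕ → M} {w : ℕ → Set M} (h : ∀ n ∈ φ.freeN, v n = v' n) :
    Sat S 𝔛 v w φ ↔ Sat S 𝔛 v' w φ := by
  induction φ generalizing v v' w with
  | eq t u | lt t u =>
    simp only [Fml.freeN, Finset.mem_union, or_imp, forall_and] at h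
    simp only [Sat, PTerm.val_congr h.1, PTerm.val_congr h.2]
  | mem t k => simp only [Sat, PTerm.val_congr h]
  | not φ ih => exact not_congr (ih h)
  | imp φ ψ ihφ ihψ =>
    simp only [Fml.freeN, Finset.mem_union, or_imp, forall_and] at h
    exact imp_congr (ihφ h.1) (ihψ h.2)
  | all x φ ih =>
    refine forall_congr' fun a => ih fun n hn => ?_
    by_cases hnx : n = x
    · simp [hnx]
    · simpa [hnx] using h n (Finset.mem_erase.2 ⟨hnx, hn⟩)
  | allS k φ ih => exact forall₂_congr fun X _ => ih h

theorem sat_update_of_notMem {φ : Fml} {x : ℕ} (hx : x ∉ φ.freeN) (v : ℕ → M) (a : M)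
    (w : ℕ → Set M) : Sat S 𝔛 (update v x a) w φ ↔ Sat S 𝔛 v w φ :=
  sat_congr fun n hn => update_of_ne (fun (e : n = x) => hx (e ▸ hn)) a v

theorem sat_and {v : ℕ → M} {w : ℕ → Set M} {φ ψ : Fml} :
    Sat S 𝔛 v w (φ.and ψ) ↔ Sat S 𝔛 v w φ ∧ Sat S 𝔛 v w ψ := by
  simp only [Fml.and, Sat, Classical.not_imp, not_not]

theorem sat_ex {v : ℕ → M} {w : ℕ → Set M} {x : ℕ} {φ : Fml} :
    Sat S 𝔛 v w (Fml.ex x φ) ↔ ∃ a, Sat S 𝔛 (update v x a) w φ := by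
  simp only [Fml.ex, Sat, not_forall, not_not]

def Fml.ball (x : ℕ) (t : PTerm) (φ : Fml) : Fml := .all x (.imp (.lt (.var x) t) φ)

def Fml.bex (x : ℕ) (t : PTerm) (φ : Fml) : Fml := .not (Fml.ball x t (.not φ))

theorem IsDelta0.and {φ ψ : Fml} (hφ : IsDelta0 φ) (hψ : IsDelta0 ψ) : IsDelta0 (φ.and ψ) :=
  .not (.imp hφ (.not hψ))

theorem IsDelta0.bex {x : ℕ} {t : PTerm} {φ : Fml} (hx : x ∉ t.vars) (hφ : IsDelta0 φ) :
    IsDelta0 (Fml.bex x t φ) :=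
  .not (.ball x t hx (.not hφ))

theorem sat_ball {v : ℕ → M} {w : ℕ → Set M} {x : ℕ} {t : PTerm} {φ : Fml} (hx : x ∉ t.vars) :
    Sat S 𝔛 v w (Fml.ball x t φ) ↔ ∀ c, S.lt c (t.val S v) → Sat S 𝔛 (update v x c) w φ := by
  have ht : ∀ c, t.val S (update v x c) = t.val S v := fun c =>
    PTerm.val_congr fun n hn => update_of_ne (fun (e : n = x) => hx (e ▸ hn)) c v
  simp only [Fml.ball, Sat, PTerm.val, update_self, ht]

theorem sat_bex {v : ℕ → M} {w : ℕ → Set M} {x : ℕ} {t : PTerm} {φ : Fml} (hx : x ∉ t.vars) :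
    Sat S 𝔛 v w (Fml.bex x t φ) ↔ ∃ c, S.lt c (t.val S v) ∧ Sat S 𝔛 (update v x c) w φ := by
  rw [Fml.bex, Sat, sat_ball hx]
  simp only [Sat, not_forall, not_not, exists_prop]

theorem SatRCA0.delta0_compr (hR : SatRCA0 S 𝔛) {θ : Fml} (hθ : IsDelta0 θ) {w : ℕ → Set M}
    (hw : ∀ k, w k ∈ 𝔛) (x : ℕ) (v : ℕ → M) {A : Set M}
    (hA : ∀ a, a ∈ A ↔ Sat S 𝔛 (update v x a) w θ) : A ∈ 𝔛 := by
  have : Nonempty M := ⟨S.zero⟩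
  -- quantifying a variable not free in `θ` makes `θ` both `Σ⁰₁` and `Π⁰₁`
  obtain ⟨y, hy⟩ := Infinite.exists_notMem_finset θ.freeN
  have hex : ∀ u, Sat S 𝔛 u w (Fml.ex y θ) ↔ Sat S 𝔛 u w θ := fun u => by
    simp only [sat_ex, sat_update_of_notMem hy, exists_const]
  have hall : ∀ u, Sat S 𝔛 u w (Fml.all y θ) ↔ Sat S 𝔛 u w θ := fun u => by
    simp only [Sat, sat_update_of_notMem hy, forall_const]
  convert hR.2.2 (Fml.ex y θ) (Fml.all y θ) x ⟨y, θ, hθ, rfl⟩ ⟨y, θ, hθ, rfl⟩ v w hw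
    (fun a => by rw [hex, hall])
  ext a
  exact (hA a).trans (hex _).symm

theorem SatRCA0.diff_mem (hR : SatRCA0 S 𝔛) {A B : Set M} (hA : A ∈ 𝔛) (hB : B ∈ 𝔛) : A \ B ∈ 𝔛 :=
  hR.delta0_compr (w := fun k => if k = 0 then A else B)
    (θ := (Fml.mem (.var 0) 0).and (.not (.mem (.var 0) 1)))
    ((IsDelta0.mem _ _).and (.not (.mem _ _)))
    (fun k => by split_ifs <;> assumption) 0 (fun _ => S.zero) fun a => by
      simp [sat_and, Sat, PTerm.val]

theorem SatRCA0.univ_mem (hR : SatRCA0 S 𝔛) (h𝔛 : 𝔛.Nonempty) : Set.univ ∈ 𝔛 :=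
  hR.delta0_compr (.eq .zero .zero) (fun _ => h𝔛.some_mem) 0 (fun _ => S.zero) fun a => by
    simp [Sat]

theorem SatRCA0.set_induction (hR : SatRCA0 S 𝔛) {X : Set M} (hX : X ∈ 𝔛) (h0 : S.zero ∈ X)
    (hsucc : ∀ a ∈ X, S.add a S.one ∈ X) (a : M) : a ∈ X := by
  have : Nonempty M := ⟨S.zero⟩
  have hX' : ∀ b, Sat S 𝔛 (update (fun _ => S.zero) 0 b) (fun _ => X)
      (Fml.ex 1 (.mem (.var 0) 0)) ↔ b ∈ X := fun b => by
    simp [sat_ex, Sat, PTerm.val]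
  refine (hX' a).1 (hR.2.1 _ 0 ⟨1, _, .mem _ _, rfl⟩ _ _ (fun _ => hX)
    ⟨(hX' _).2 h0, fun b hb => (hX' _).2 (hsucc b ((hX' b).1 hb))⟩ a)

theorem SatRCA0.exists_eq_add_self_or (hR : SatRCA0 S 𝔛) (h𝔛 : 𝔛.Nonempty) (a : M) :
    ∃ q, a = S.add q q ∨ a = S.add (S.add q q) S.one := by
  have hp := hR.1
  have hhalf : ∀ b, Sat S 𝔛 (update (fun _ => S.zero) 0 b) (fun _ => h𝔛.some)
      (Fml.ex 1 ((Fml.eq (.var 0) (.add (.var 1) (.var 1))).or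
        (.eq (.var 0) (.add (.add (.var 1) (.var 1)) .one)))) ↔
      ∃ q, b = S.add q q ∨ b = S.add (S.add q q) S.one := fun b => by
    simp [sat_ex, Fml.or, Sat, PTerm.val, or_iff_not_imp_left]
  refine (hhalf a).1 (hR.2.1 _ 0 ⟨1, _, .imp (.not (.eq _ _)) (.eq _ _), rfl⟩ _ _
    (fun _ => h𝔛.some_mem) ⟨(hhalf _).2 ⟨S.zero, Or.inl (hp.add_zero _).symm⟩, fun b hb => ?_⟩ a)
  obtain ⟨q, rfl | rfl⟩ := (hhalf b).1 hb
  · exact (hhalf _).2 ⟨q, Or.inr rfl⟩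
  · exact (hhalf _).2 ⟨S.add q S.one, Or.inl (hp.add_one_add_add_one q).symm⟩

theorem SatRCA0.exists_pairRel (hR : SatRCA0 S 𝔛) (h𝔛 : 𝔛.Nonempty) (a b : M) :
    ∃ p, S.PairRel p a b := by
  have hp := hR.1
  set s := S.add a b
  suffices ∃ t, S.mul s (S.add s S.one) = S.add t t by
    obtain ⟨t, ht⟩ := this
    refine ⟨S.add t a, ?_⟩
    rw [AStr.PairRel, hp.two_mul, hp.two_mul, hp.add_add_add_comm, ← ht]
  obtain ⟨q, hq | hq⟩ := hR.exists_eq_add_self_or h𝔛 s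
  · exact ⟨S.mul q (S.add s S.one), by rw [hq, hp.add_mul]⟩
  · refine ⟨S.mul s (S.add q S.one), ?_⟩
    rw [← hp.mul_add]
    congr 1
    rw [hq, hp.add_one_add_add_one]

/-- `p` codes the list `[a₀, …, aₖ₋₁]` as `⟨a₀, ⟨a₁, … ⟨aₖ₋₁, 0⟩ …⟩⟩`. -/
def AStr.TupleRel (S : AStr M) : List M → M → Prop
  | [], p => p = S.zero
  | a :: as, p => ∃ q, S.PairRel p a q ∧ S.TupleRel as q

theorem PAminusSem.tupleRel_inj (hp : PAminusSem S) :
    ∀ {as bs : List M} {p : M}, S.TupleRel as p → S.TupleRel bs p →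
      as.length = bs.length → as = bs
  | [], [], _, _, _, _ => rfl
  | a :: as, b :: bs, _, ⟨q, hq, has⟩, ⟨r, hr, hbs⟩, hl => by
    obtain ⟨rfl, rfl⟩ := hp.pairRel_inj hq hr
    rw [hp.tupleRel_inj has hbs (Nat.succ.inj hl)]

/-- `v` with the variables `xs` set to the values `as`; a repeated variable takes its first
value. -/
def assign (v : ℕ → M) (xs : List ℕ) (as : List M) : ℕ → M :=
  fun m => as.getD (xs.idxOf m) (v m)

theorem assign_cons (v : ℕ → M) (x : ℕ) (xs : List ℕ) (a : M) (as : List M) :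
    assign v (x :: xs) (a :: as) = update (assign v xs as) x a := by
  ext m
  by_cases hm : m = x
  · simp [assign, hm]
  · simp [assign, hm, List.idxOf_cons_ne _ (Ne.symm hm)]

theorem assign_of_mem {v : ℕ → M} {xs : List ℕ} {as : List M} (hl : as.length = xs.length)
    {m : ℕ} (hm : m ∈ xs) :
    assign v xs as m = as[xs.idxOf m]'(hl ▸ List.idxOf_lt_length_iff.2 hm) :=
  List.getD_eq_getElem _ _ _

theorem assign_of_notMem {v : ℕ → M} {xs : List ℕ} {as : List M} (hl : as.length = xs.length)
    {m : ℕ} (hm : m ∉ xs) : assign v xs as m = v m :=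
  List.getD_eq_default _ _ (by rw [List.idxOf_eq_length_iff.2 hm, hl])

def blockUpdate (u : ℕ → M) (b : ℕ) : List M → ℕ → M
  | [] => u
  | c :: cs => blockUpdate (update u (b + 1) c) (b + 2) cs

theorem blockUpdate_update_of_le {m b : ℕ} (h : m ≤ b) (d : M) :
    ∀ (u : ℕ → M) (cs : List M),
      blockUpdate (update u m d) b cs = update (blockUpdate u b cs) m d
  | _, [] => rfl
  | u, c :: cs => by
    rw [blockUpdate, blockUpdate, update_comm (by omega),
      blockUpdate_update_of_le (by omega) d _ cs]

theorem blockUpdate_of_le {m b : ℕ} (h : m ≤ b) : ∀ (u : ℕ → M) (cs : List M),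
    blockUpdate u b cs m = u m
  | _, [] => rfl
  | u, c :: cs => by
    rw [blockUpdate, blockUpdate_of_le (by omega), update_of_ne (by omega)]

theorem blockUpdate_odd : ∀ (u : ℕ → M) (b : ℕ) (cs : List M) (i : ℕ) (hi : i < cs.length),
    blockUpdate u b cs (b + 1 + 2 * i) = cs[i]
  | u, b, c :: cs, 0, _ => by
    rw [blockUpdate, blockUpdate_of_le (by omega), Nat.mul_zero, Nat.add_zero, update_self,
      List.getElem_cons_zero]
  | u, b, c :: cs, i + 1, hi => by
    rw [blockUpdate, show b + 1 + 2 * (i + 1) = b + 2 + 1 + 2 * i by ring,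
      blockUpdate_odd _ _ cs i (by simpa using hi), List.getElem_cons_succ]

/-- The term `2 x + 1`, which bounds both components of the pair coded by `x`. -/
def PTerm.pairBound (x : ℕ) : PTerm := .add (.add (.var x) (.var x)) .one

/-- The formula `x = ⟨y, z⟩`. -/
def pairFml (x y z : ℕ) : Fml :=
  .eq (.mul (.add .one .one) (.var x))
    (.add (.mul (.add (.var y) (.var z)) (.add (.add (.var y) (.var z)) .one))
      (.mul (.add .one .one) (.var y)))

/-- `x_b` codes a tuple of length `n` whose entries, put into `x_{b+1}, x_{b+3}, …`,
satisfy `θ`; the successive tails of the tuple are held in `x_{b+2}, x_{b+4}, …`. -/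
def decodeFml (b : ℕ) : ℕ → Fml → Fml
  | 0, θ => (Fml.eq (.var b) .zero).and θ
  | n + 1, θ => Fml.bex (b + 1) (.pairBound b) (Fml.bex (b + 2) (.pairBound b)
      ((pairFml b (b + 1) (b + 2)).and (decodeFml (b + 2) n θ)))

theorem isDelta0_decodeFml {θ : Fml} (hθ : IsDelta0 θ) : ∀ {b n : ℕ}, IsDelta0 (decodeFml b n θ)
  | _, 0 => (IsDelta0.eq _ _).and hθ
  | b, n + 1 => by
    have hb1 : b + 1 ∉ (PTerm.pairBound b).vars := by simp [PTerm.pairBound, PTerm.vars]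
    have hb2 : b + 2 ∉ (PTerm.pairBound b).vars := by simp [PTerm.pairBound, PTerm.vars]
    exact .bex hb1 (.bex hb2 ((IsDelta0.eq _ _).and (isDelta0_decodeFml hθ)))

theorem PTerm.val_pairBound {v : ℕ → M} {x : ℕ} :
    (PTerm.pairBound x).val S v = S.add (S.add (v x) (v x)) S.one := rfl

theorem sat_pairFml {v : ℕ → M} {w : ℕ → Set M} {x y z : ℕ} :
    Sat S 𝔛 v w (pairFml x y z) ↔ S.PairRel (v x) (v y) (v z) := Iff.rfl

theorem sat_decodeFml (hp : PAminusSem S) {w : ℕ → Set M} {θ : Fml} : ∀ {b n : ℕ},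
    (∀ u i d, Sat S 𝔛 (update u (b + 2 * (i + 1)) d) w θ ↔ Sat S 𝔛 u w θ) → ∀ u : ℕ → M,
    Sat S 𝔛 u w (decodeFml b n θ) ↔
      ∃ cs : List M, cs.length = n ∧ S.TupleRel cs (u b) ∧ Sat S 𝔛 (blockUpdate u b cs) w θ
  | b, 0, _, u => by
    simp [decodeFml, sat_and, Sat, PTerm.val, AStr.TupleRel, blockUpdate]
  | b, n + 1, hθ, u => by
    have hθ' : ∀ u i d, Sat S 𝔛 (update u (b + 2 + 2 * (i + 1)) d) w θ ↔ Sat S 𝔛 u w θ :=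
      fun u i d => by rw [show b + 2 + 2 * (i + 1) = b + 2 * (i + 1 + 1) by ring]; exact hθ u _ d
    have hb1 : b + 1 ∉ (PTerm.pairBound b).vars := by simp [PTerm.pairBound, PTerm.vars]
    have hb2 : b + 2 ∉ (PTerm.pairBound b).vars := by simp [PTerm.pairBound, PTerm.vars]
    have hθ0 : ∀ u d, Sat S 𝔛 (update u (b + 2) d) w θ ↔ Sat S 𝔛 u w θ := fun u d => hθ u 0 d
    rw [decodeFml, sat_bex hb1]
    simp only [sat_bex hb2, sat_and, sat_pairFml, sat_decodeFml hp (b := b + 2) (n := n) hθ',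
      blockUpdate_update_of_le (le_refl (b + 2)), hθ0, PTerm.val_pairBound, update_self,
      update_of_ne (show b + 1 ≠ b + 2 by omega), update_of_ne (show b ≠ b + 1 by omega),
      update_of_ne (show b ≠ b + 2 by omega)]
    constructor
    · rintro ⟨c, -, d, -, hcd, cs, hl, hcs, hsat⟩
      exact ⟨c :: cs, by simp [hl], ⟨d, hcd, hcs⟩, hsat⟩
    · rintro ⟨_ | ⟨c, cs⟩, hl, hcs, hsat⟩
      · simp at hl
      · obtain ⟨d, hcd, hcs⟩ := hcs
        obtain ⟨hc, hd⟩ := hp.pairRel_components_lt hcd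
        exact ⟨c, hc, d, hd, hcd, cs, by simpa using hl, hcs, hsat⟩

def codeSet (S : AStr M) (𝔛 : Set (Set M)) (φ : Fml) (xs : List ℕ) (v : ℕ → M)
    (w : ℕ → Set M) : Set M :=
  {p | ∃ as : List M, as.length = xs.length ∧ S.TupleRel as p ∧ Sat S 𝔛 (assign v xs as) w φ}

section

variable {φ ψ : Fml} {xs : List ℕ} {v : ℕ → M} {w : ℕ → Set M}

theorem mem_codeSet_iff_of_tupleRel (hp : PAminusSem S) {as : List M} {p : M}
    (hl : as.length = xs.length) (hc : S.TupleRel as p) :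
    p ∈ codeSet S 𝔛 φ xs v w ↔ Sat S 𝔛 (assign v xs as) w φ :=
  ⟨fun ⟨_, hbl, hbc, hb⟩ => hp.tupleRel_inj hbc hc (hbl.trans hl.symm) ▸ hb,
    fun h => ⟨as, hl, hc, h⟩⟩

theorem codeSet_not (hp : PAminusSem S) :
    codeSet S 𝔛 (.not φ) xs v w =
      codeSet S 𝔛 (.eq .zero .zero) xs v w \ codeSet S 𝔛 φ xs v w := by
  ext p
  constructor
  · rintro ⟨as, hl, hc, hn⟩
    exact ⟨⟨as, hl, hc, rfl⟩, fun h => hn ((mem_codeSet_iff_of_tupleRel hp hl hc).1 h)⟩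
  · rintro ⟨⟨as, hl, hc, -⟩, hn⟩
    exact ⟨as, hl, hc, fun h => hn ⟨as, hl, hc, h⟩⟩

theorem codeSet_imp (hp : PAminusSem S) :
    codeSet S 𝔛 (.imp φ ψ) xs v w =
      codeSet S 𝔛 (.eq .zero .zero) xs v w \ (codeSet S 𝔛 φ xs v w \ codeSet S 𝔛 ψ xs v w) := by
  ext p
  constructor
  · rintro ⟨as, hl, hc, himp⟩
    refine ⟨⟨as, hl, hc, rfl⟩, fun ⟨hφ, hψ⟩ => hψ ?_⟩
    rw [mem_codeSet_iff_of_tupleRel hp hl hc] at hφ ⊢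
    exact himp hφ
  · rintro ⟨⟨as, hl, hc, -⟩, h⟩
    refine ⟨as, hl, hc, fun hφ => by_contra fun hψ => h ⟨⟨as, hl, hc, hφ⟩, fun h' => hψ ?_⟩⟩
    exact (mem_codeSet_iff_of_tupleRel hp hl hc).1 h'

end

theorem codeSet_mem_of_renaming (hR : SatRCA0 S 𝔛) {α : Fml}
    (hα : ∀ σ : ℕ → ℕ, ∃ α', IsDelta0 α' ∧ ∀ u w, Sat S 𝔛 u w α' ↔ Sat S 𝔛 (u ∘ σ) w α)
    (xs : List ℕ) (v : ℕ → M) (hw : ∀ k, w k ∈ 𝔛) : codeSet S 𝔛 α xs v w ∈ 𝔛 := by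
  obtain ⟨N, hN⟩ : ∃ N, ∀ m ∈ α.freeN, m < N :=
    ⟨α.freeN.sup id + 1, fun m hm => Nat.lt_succ_of_le (Finset.le_sup (f := id) hm)⟩
  -- the tuple is decoded into `N + 1, N + 3, …`, above the free variables of `α`
  let σ : ℕ → ℕ := fun m => if m ∈ xs then N + 1 + 2 * xs.idxOf m else m
  obtain ⟨α', hα'δ, hα'⟩ := hα σ
  have hσ : ∀ u i d, Sat S 𝔛 (update u (N + 2 * (i + 1)) d) w α' ↔ Sat S 𝔛 u w α' :=
    fun u i d => by
      rw [hα', hα']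
      refine sat_congr fun m hm => update_of_ne ?_ _ _
      have := hN m hm
      simp only [σ]
      split_ifs <;> omega
  refine hR.delta0_compr (isDelta0_decodeFml hα'δ (b := N) (n := xs.length)) hw N v fun p => ?_
  rw [sat_decodeFml hR.1 hσ, update_self]
  refine exists_congr fun cs => and_congr_right fun hl => and_congr_right fun _ => ?_
  rw [hα']
  refine sat_congr fun m hm => ?_
  simp only [Function.comp, σ]
  split_ifs with hmx
  · rw [assign_of_mem hl hmx, blockUpdate_odd]
  · rw [assign_of_notMem hl hmx, blockUpdate_of_le (hN m hm).le, update_of_ne (hN m hm).ne]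

theorem IsFilterOn.univ_mem {α : Type} {P U : Set (Set α)} (hU : IsFilterOn P U)
    (h : Set.univ ∈ P) : Set.univ ∈ U :=
  let ⟨A, hA⟩ := hU.2.1
  hU.2.2.2.1 A hA _ h (Set.subset_univ A)

/-- `{⟨p, m⟩ | ∀ c < m, ⟨c, p⟩ ∈ B}`. -/
def AStr.allBelow (S : AStr M) (B : Set M) : Set M :=
  {r | ∃ p m, S.PairRel r p m ∧ ∀ c, S.lt c m → ∃ q, S.PairRel q c p ∧ q ∈ B}

theorem SatRCA0.allBelow_mem (hR : SatRCA0 S 𝔛) {B : Set M} (hB : B ∈ 𝔛) :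
    S.allBelow B ∈ 𝔛 := by
  have hp := hR.1
  refine hR.delta0_compr (w := fun _ => B)
    (θ := Fml.bex 1 (.pairBound 0) (Fml.bex 2 (.pairBound 0) ((pairFml 0 1 2).and
      (Fml.ball 3 (.var 2) (Fml.bex 4 (.var 0) ((pairFml 4 3 1).and (.mem (.var 4) 0)))))))
    (.bex (by decide) (.bex (by decide) ((IsDelta0.eq _ _).and (.ball _ _ (by decide)
      (.bex (by decide) ((IsDelta0.eq _ _).and (.mem _ _)))))))
    (fun _ => hB) 0 (fun _ => S.zero) fun r => ?_
  simp (disch := decide) only [sat_bex, sat_ball, sat_and, sat_pairFml, Sat, PTerm.val_pairBound,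
    PTerm.val, update_self, update_of_ne]
  constructor
  · rintro ⟨p, m, hr, h⟩
    obtain ⟨hpr, hmr⟩ := hp.pairRel_components_lt hr
    refine ⟨p, hpr, m, hmr, hr, fun c hc => ?_⟩
    obtain ⟨q, hq, hqB⟩ := h c hc
    have hsum : S.lt (S.add c p) (S.add p m) := hp.add_comm m p ▸ hp.add_lt_add_right hc p
    exact ⟨q, hp.pairRel_lt_pairRel hq hr hsum, hq, hqB⟩
  · rintro ⟨p, -, m, -, hr, h⟩
    exact ⟨p, m, hr, fun c hc => let ⟨q, _, hq, hqB⟩ := h c hc; ⟨q, hq, hqB⟩⟩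

theorem PAminusSem.sliceAt_allBelow (hp : PAminusSem S)
    (hpair : ∀ a b : M, ∃ r, S.PairRel r a b) (B : Set M) (p : M) :
    S.SliceAt (S.allBelow B) p = {m | ∀ c, S.lt c m → ∃ q, S.PairRel q c p ∧ q ∈ B} := by
  ext m
  constructor
  · rintro ⟨r, hr, p', m', hr', h⟩
    obtain ⟨rfl, rfl⟩ := hp.pairRel_inj hr hr'
    exact h
  · intro h
    obtain ⟨r, hr⟩ := hpair p m
    exact ⟨r, hr, p, m, hr, h⟩

section

variable {φ : Fml} {z : ℕ} {xs : List ℕ} {v : ℕ → M} {w : ℕ → Set M}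

theorem PAminusSem.forall_pairRel_mem_codeSet_iff (hp : PAminusSem S)
    (hpair : ∀ a b : M, ∃ r, S.PairRel r a b) {p : M} :
    (∀ c, ∃ q, S.PairRel q c p ∧ q ∈ codeSet S 𝔛 φ (z :: xs) v w) ↔
      p ∈ codeSet S 𝔛 (.all z φ) xs v w := by
  constructor
  · intro h
    obtain ⟨q, hq, _ | ⟨c', as⟩, hl, hc, -⟩ := h S.zero
    · simp at hl
    obtain ⟨q', hq', hc⟩ := hc
    obtain ⟨-, rfl⟩ := hp.pairRel_inj hq hq'
    refine ⟨as, by simpa using hl, hc, fun c => ?_⟩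
    obtain ⟨qc, hqc, hqcB⟩ := h c
    rw [← assign_cons]
    have hcode : S.TupleRel (c :: as) qc := ⟨p, hqc, hc⟩
    exact (mem_codeSet_iff_of_tupleRel hp (by simpa using hl) hcode).1 hqcB
  · rintro ⟨as, hl, hc, hall⟩ c
    obtain ⟨q, hq⟩ := hpair c p
    refine ⟨q, hq, c :: as, by simp [hl], ⟨p, hq, hc⟩, ?_⟩
    rw [assign_cons]
    exact hall c

theorem codeSet_all_mem (hR : SatRCA0 S 𝔛) {U : Set (Set M)} (hU : IsFilterOn (S.PX 𝔛) U)
    (hDef : S.DefinableFam 𝔛 U) (hB : codeSet S 𝔛 φ (z :: xs) v w ∈ 𝔛) :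
    codeSet S 𝔛 (.all z φ) xs v w ∈ 𝔛 := by
  have hp := hR.1
  have hpair := hR.exists_pairRel ⟨_, hB⟩
  convert hDef _ (hR.allBelow_mem hB) using 1
  ext p
  rw [Set.mem_ofPred, hp.sliceAt_allBelow hpair, ← hp.forall_pairRel_mem_codeSet_iff hpair]
  constructor
  · intro h
    convert hU.univ_mem ⟨hR.univ_mem ⟨_, hB⟩, fun b => ⟨_, trivial, hp.lt_add_one b⟩⟩
    exact Set.eq_univ_of_forall fun m c _ => h c
  · intro hmem c
    by_contra hc
    obtain ⟨m, hm, hcm⟩ := (hU.1 hmem).2 c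
    exact hc (hm c hcm)

end

def PTerm.rename (σ : ℕ → ℕ) : PTerm → PTerm
  | .var n => .var (σ n)
  | .zero => .zero
  | .one => .one
  | .add t u => .add (t.rename σ) (u.rename σ)
  | .mul t u => .mul (t.rename σ) (u.rename σ)

theorem PTerm.val_rename (σ : ℕ → ℕ) (v : ℕ → M) (t : PTerm) :
    (t.rename σ).val S v = t.val S (v ∘ σ) := by
  induction t <;> simp [PTerm.rename, PTerm.val, *]

theorem codeSet_mem (hR : SatRCA0 S 𝔛) {U : Set (Set M)} (hU : IsFilterOn (S.PX 𝔛) U)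
    (hDef : S.DefinableFam 𝔛 U) {φ : Fml} (hφ : φ.IsArith) (xs : List ℕ) (v : ℕ → M)
    {w : ℕ → Set M} (hw : ∀ k, w k ∈ 𝔛) : codeSet S 𝔛 φ xs v w ∈ 𝔛 := by
  have hcodeEq : ∀ t u xs, codeSet S 𝔛 (.eq t u) xs v w ∈ 𝔛 := fun t u xs =>
    codeSet_mem_of_renaming hR (fun σ => ⟨.eq (t.rename σ) (u.rename σ), .eq _ _,
      fun _ _ => by simp only [Sat, PTerm.val_rename]⟩) xs v hw
  induction φ generalizing xs with
  | eq t u => exact hcodeEq t u xs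
  | lt t u =>
    exact codeSet_mem_of_renaming hR (fun σ => ⟨.lt (t.rename σ) (u.rename σ), .lt _ _,
      fun _ _ => by simp only [Sat, PTerm.val_rename]⟩) xs v hw
  | mem t k =>
    exact codeSet_mem_of_renaming hR (fun σ => ⟨.mem (t.rename σ) k, .mem _ _,
      fun _ _ => by simp only [Sat, PTerm.val_rename]⟩) xs v hw
  | not φ ih =>
    rw [codeSet_not hR.1]
    exact hR.diff_mem (hcodeEq _ _ xs) (ih hφ xs)
  | imp φ ψ ihφ ihψ =>
    rw [codeSet_imp hR.1]
    exact hR.diff_mem (hcodeEq _ _ xs) (hR.diff_mem (ihφ hφ.1 xs) (ihψ hφ.2 xs))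
  | all z φ ih => exact codeSet_all_mem hR hU hDef (ih hφ (z :: xs))
  | allS => exact hφ.elim

theorem SatRCA0.setOf_pairRel_mem (hR : SatRCA0 S 𝔛) {B : Set M} (hB : B ∈ 𝔛) (b : M) :
    {a | ∃ q, S.PairRel q a b ∧ q ∈ B} ∈ 𝔛 := by
  have hp := hR.1
  have hpair := hR.exists_pairRel ⟨_, hB⟩
  convert hR.2.2 (Fml.ex 1 ((pairFml 1 0 2).and (.mem (.var 1) 0)))
    (.all 1 ((pairFml 1 0 2).imp (.mem (.var 1) 0))) 0
    ⟨1, _, (IsDelta0.eq _ _).and (.mem _ _), rfl⟩ ⟨1, _, .imp (.eq _ _) (.mem _ _), rfl⟩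
    (fun _ => b) (fun _ => B) (fun _ => hB) (fun a => ?_) using 1
  · ext a
    simp (disch := decide) only [Set.mem_ofPred, sat_ex, sat_and, sat_pairFml, Sat, PTerm.val,
      update_self, update_of_ne]
  · simp (disch := decide) only [sat_ex, sat_and, sat_pairFml, Sat, PTerm.val, update_self,
      update_of_ne]
    constructor
    · rintro ⟨q, hq, hqB⟩ q' hq'
      exact hp.pairRel_unique hq hq' ▸ hqB
    · intro h
      obtain ⟨q, hq⟩ := hpair a b
      exact ⟨q, hq, h q hq⟩

theorem SatRCA0.arith_compr (hR : SatRCA0 S 𝔛) {U : Set (Set M)} (hU : IsFilterOn (S.PX 𝔛) U)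
    (hDef : S.DefinableFam 𝔛 U) {φ : Fml} (hφ : φ.IsArith) (x : ℕ) (v : ℕ → M)
    {w : ℕ → Set M} (hw : ∀ k, w k ∈ 𝔛) : {a | Sat S 𝔛 (update v x a) w φ} ∈ 𝔛 := by
  have hB := codeSet_mem hR hU hDef hφ [x] v hw
  have hpair := hR.exists_pairRel ⟨_, hB⟩
  convert hR.setOf_pairRel_mem hB S.zero using 1
  ext a
  have hassign : assign v [x] [a] = update v x a := by rw [assign_cons]; rfl
  have hcode : ∀ {q}, S.PairRel q a S.zero → S.TupleRel [a] q := fun hq => ⟨S.zero, hq, rfl⟩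
  constructor
  · intro h
    obtain ⟨q, hq⟩ := hpair a S.zero
    exact ⟨q, hq, [a], rfl, hcode hq, hassign ▸ h⟩
  · rintro ⟨q, hq, hqB⟩
    rw [Set.mem_ofPred, ← hassign]
    exact (mem_codeSet_iff_of_tupleRel hR.1 rfl (hcode hq)).1 hqB

end

/-- Lemma 6 of the paper, Kirby. If `(M,𝔛) ⊨ RCA₀` and there is a
definable ultrafilter on `P_𝔛`, then `(M,𝔛) ⊨ ACA₀`. -/
theorem definable_ultrafilter_gives_ACA
    {M : Type} (S : AStr M) (𝔛 U : Set (Set M))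
    (hRCA : SatRCA0 S 𝔛)
    (hUltra : IsUltraOn (S.PX 𝔛) U)
    (hDef : S.DefinableFam 𝔛 U) :
    SatACA0 S 𝔛 :=
  ⟨hRCA.1, fun _ hX h0 hsucc => hRCA.set_induction hX h0 hsucc,
    fun _ x hφ v _ hw => hRCA.arith_compr hUltra.1 hDef hφ x v hw⟩

end Paper
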